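/- arXiv:2602.23884 — 2 statements merged into one kernel-verified Lean document; each statement's English description precedes it below -/
import Mathlib

section
/- Let G and H be finite simple graphs with G connected. If there exist vertex covers U and L of the empty bisector graph Ĝ such that (U,L) is a forward-equalized pair of G, |U ∩ L| = β*(G) and |U| = β(Ĝ), then ξ(G⊙H) = β(Ĝ)·n(H) + α(Ĝ) + β*(G). -/
/-!
Distances in `G ⊙ H` between vertices over different base vertices are the `G`-distances of
the base vertices plus one for each endpoint lying in a copy of `H`, while two vertices of one
copy are at distance at most two. Hence `L` together with the copies of `H` over `U` is a
distance-equalizer set, of size `|L| + |U|·n(H) = α(Ĝ) + β*(G) + β(Ĝ)·n(H)`. Conversely, for a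
distance-equalizer set `S`, the set `A` of base vertices in `S` and the set `B` of base vertices
whose whole copy lies in `S` are vertex covers of `Ĝ`, `(B, A ∪ Bᶜ)` is forward-equalized, and `S`
meets every copy over a vertex outside `A ∪ B`; counting gives
`|S| ≥ |A| + |B|·n(H) + |(A ∪ B)ᶜ| ≥ β(Ĝ)·n(H) + α(Ĝ) + β*(G)`.
-/

universe u v

variable {V : Type u} {W : Type v}

/-- A distance-equalizer set of a graph: for every pair of distinct vertices outside `S`
there is a vertex of `S` equidistant to both. -/
def IsDistEqSet {α : Type*} (G : SimpleGraph α) (S : Set α) : Prop :=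
  ∀ ⦃x y : α⦄, x ∉ S → y ∉ S → x ≠ y → ∃ w ∈ S, G.dist w x = G.dist w y

/-- The equidistant dimension of a graph: the minimum cardinality of a distance-equalizer set. -/
noncomputable def eqdim {α : Type*} (G : SimpleGraph α) : ℕ :=
  sInf {n | ∃ S : Set α, IsDistEqSet G S ∧ S.ncard = n}

/-- The bisector of two vertices: vertices equidistant to both. -/
def bisector {α : Type*} (G : SimpleGraph α) (x y : α) : Set α :=
  {w | G.dist w x = G.dist w y}

/-- The empty bisector graph of `G`: two distinct vertices are adjacent iff their bisector
in `G` is empty. -/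
def emptyBisector {α : Type*} (G : SimpleGraph α) : SimpleGraph α where
  Adj x y := x ≠ y ∧ bisector G x y = ∅
  symm := by
    constructor
    rintro x y ⟨h1, h2⟩
    refine ⟨h1.symm, Set.eq_empty_iff_forall_notMem.mpr fun w hw => ?_⟩
    exact Set.eq_empty_iff_forall_notMem.mp h2 w
      ((show G.dist w y = G.dist w x from hw).symm)
  loopless := ⟨fun _ h => h.1 rfl⟩

/-- A vertex cover of a graph: a set of vertices meeting every edge. -/
def IsVertexCover {α : Type*} (G : SimpleGraph α) (C : Set α) : Prop :=
  ∀ ⦃x y : α⦄, G.Adj x y → x ∈ C ∨ y ∈ C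

/-- An independent set of a graph: a set of pairwise non-adjacent vertices. -/
def IsIndepSet {α : Type*} (G : SimpleGraph α) (A : Set α) : Prop :=
  ∀ ⦃x y : α⦄, x ∈ A → y ∈ A → ¬ G.Adj x y

/-- The vertex cover number `β(G)`. -/
noncomputable def vcNum {α : Type*} (G : SimpleGraph α) : ℕ :=
  sInf {n | ∃ C : Set α, IsVertexCover G C ∧ C.ncard = n}

/-- The independence number `α(G)`. -/
noncomputable def indepNum {α : Type*} (G : SimpleGraph α) : ℕ :=
  sSup {n | ∃ A : Set α, IsIndepSet G A ∧ A.ncard = n}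

/-- A forward-equalized pair `(X, Y)` of `G`: `X ∪ Y = V(G)` and for every
`a ∈ X \ Y` and `b ∈ Y \ X` there is `w` with `d(w,a) = d(w,b) + 1`. -/
def IsForwardEqualizedPair {α : Type*} (G : SimpleGraph α) (X Y : Set α) : Prop :=
  X ∪ Y = Set.univ ∧
  ∀ ⦃a⦄, a ∈ X \ Y → ∀ ⦃b⦄, b ∈ Y \ X → ∃ w, G.dist w a = G.dist w b + 1

/-- `β*(G)`: the minimum of `|X ∩ Y|` over all pairs of vertex covers `X, Y` of the
empty bisector graph of `G` such that `(X, Y)` is a forward-equalized pair of `G`. -/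
noncomputable def betaStar {α : Type*} (G : SimpleGraph α) : ℕ :=
  sInf {n | ∃ X Y : Set α,
    IsVertexCover (emptyBisector G) X ∧ IsVertexCover (emptyBisector G) Y ∧
    IsForwardEqualizedPair G X Y ∧ (X ∩ Y).ncard = n}

/-- The corona product `G ⊙ H`: one copy of `H` for each vertex `i` of `G` (the vertices
`Sum.inr (i, w)`), with `i` joined to every vertex of its copy. -/
def corona (G : SimpleGraph V) (H : SimpleGraph W) : SimpleGraph (V ⊕ V × W) where
  Adj x y :=
    match x, y with
    | Sum.inl a, Sum.inl b => G.Adj a b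
    | Sum.inl a, Sum.inr p => a = p.1
    | Sum.inr p, Sum.inl a => a = p.1
    | Sum.inr p, Sum.inr q => p.1 = q.1 ∧ H.Adj p.2 q.2
  symm := by
    constructor
    rintro (a | p) (b | q) h
    · exact h.symm
    · exact h
    · exact h
    · exact ⟨h.1.symm, h.2.symm⟩
  loopless := by
    constructor
    rintro (a | p) h
    · exact G.loopless.irrefl a h
    · exact H.loopless.irrefl p.2 h.2

open Sum

section Graphs

variable {α : Type*} {Γ : SimpleGraph α}

theorem SimpleGraph.Walk.apply_le_apply_add_length {f : α → ℕ}
    (hf : ∀ ⦃x y⦄, Γ.Adj x y → f y ≤ f x + 1) {u v : α} (p : Γ.Walk u v) :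
    f v ≤ f u + p.length := by
  induction p with
  | nil => simp
  | cons h _ ih =>
    have := hf h
    rw [SimpleGraph.Walk.length_cons]
    omega

theorem SimpleGraph.Reachable.apply_le_apply_add_dist {f : α → ℕ}
    (hf : ∀ ⦃x y⦄, Γ.Adj x y → f y ≤ f x + 1) {u v : α} (h : Γ.Reachable u v) :
    f v ≤ f u + Γ.dist u v := by
  obtain ⟨p, hp⟩ := h.exists_walk_length_eq_dist
  exact hp ▸ p.apply_le_apply_add_length hf

theorem isVertexCover_compl_iff {A : Set α} : IsVertexCover Γ Aᶜ ↔ IsIndepSet Γ A := by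
  simp only [IsVertexCover, IsIndepSet, Set.mem_compl_iff]
  exact ⟨fun h x y hx hy hxy => by simpa [hx, hy] using h hxy,
    fun h x y hxy => by by_contra! hc; exact h hc.1 hc.2 hxy⟩

theorem IsVertexCover.mono {C D : Set α} (hC : IsVertexCover Γ C) (hCD : C ⊆ D) :
    IsVertexCover Γ D :=
  fun _ _ h => (hC h).imp (@hCD _) (@hCD _)

theorem vcNum_le {C : Set α} (hC : IsVertexCover Γ C) : vcNum Γ ≤ C.ncard :=
  Nat.sInf_le ⟨C, hC, rfl⟩

theorem exists_isVertexCover_ncard_eq_vcNum (Γ : SimpleGraph α) :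
    ∃ C : Set α, IsVertexCover Γ C ∧ C.ncard = vcNum Γ :=
  Nat.sInf_mem (s := {n | ∃ C : Set α, IsVertexCover Γ C ∧ C.ncard = n})
    ⟨_, Set.univ, fun _ _ _ => Or.inl trivial, rfl⟩

theorem indepNum_add_vcNum [Finite α] (Γ : SimpleGraph α) :
    indepNum Γ + vcNum Γ = Nat.card α := by
  have hbdd : BddAbove {n | ∃ A : Set α, IsIndepSet Γ A ∧ A.ncard = n} :=
    ⟨Nat.card α, by rintro _ ⟨A, -, rfl⟩; exact Set.ncard_le_card A⟩
  refine le_antisymm ?_ ?_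
  · have : indepNum Γ ≤ Nat.card α - vcNum Γ := by
      unfold indepNum
      refine csSup_le ⟨0, ∅, fun _ _ hx => absurd hx (Set.notMem_empty _), Set.ncard_empty α⟩ ?_
      rintro _ ⟨A, hA, rfl⟩
      have := vcNum_le (isVertexCover_compl_iff.2 hA)
      have := Set.ncard_add_ncard_compl A
      omega
    have := vcNum_le (Γ := Γ) (C := Set.univ) fun _ _ _ => Or.inl trivial
    rw [Set.ncard_univ] at this
    omega
  · obtain ⟨C, hC, hCcard⟩ := exists_isVertexCover_ncard_eq_vcNum Γ
    have : Cᶜ.ncard ≤ indepNum Γ :=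
      le_csSup hbdd ⟨Cᶜ, isVertexCover_compl_iff.1 (by rwa [compl_compl]), rfl⟩
    have := Set.ncard_add_ncard_compl C
    omega

theorem isVertexCover_emptyBisector_iff {G : SimpleGraph α} {C : Set α} :
    IsVertexCover (emptyBisector G) C ↔
      ∀ ⦃i j⦄, i ∉ C → j ∉ C → i ≠ j → ∃ k, G.dist k i = G.dist k j := by
  simp only [IsVertexCover, emptyBisector, bisector, Set.eq_empty_iff_forall_notMem]
  constructor
  · intro h i j hi hj hij
    by_contra! hk
    simpa [hi, hj] using h ⟨hij, hk⟩
  · intro h i j ⟨hij, hk⟩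
    by_contra! hc
    obtain ⟨k, hk'⟩ := h hc.1 hc.2 hij
    exact hk k hk'

theorem betaStar_le_ncard_inter {G : SimpleGraph α} {X Y : Set α}
    (hX : IsVertexCover (emptyBisector G) X) (hY : IsVertexCover (emptyBisector G) Y)
    (hXY : IsForwardEqualizedPair G X Y) : betaStar G ≤ (X ∩ Y).ncard :=
  Nat.sInf_le ⟨X, Y, hX, hY, hXY, rfl⟩

theorem eqdim_le {S : Set α} (hS : IsDistEqSet Γ S) : eqdim Γ ≤ S.ncard :=
  Nat.sInf_le ⟨S, hS, rfl⟩

theorem le_eqdim {n : ℕ} (h : ∀ S, IsDistEqSet Γ S → n ≤ S.ncard) : n ≤ eqdim Γ :=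
  le_csInf ⟨_, Set.univ, fun _ _ hx => (hx trivial).elim, rfl⟩
    (by rintro _ ⟨S, hS, rfl⟩; exact h S hS)

end Graphs

theorem Set.ncard_image_inl_union_image_inr {α β : Type*} [Finite α] [Finite β]
    (s : Set α) (t : Set β) :
    (inl '' s ∪ inr '' t).ncard = s.ncard + t.ncard := by
  rw [Set.ncard_union_eq (by simp [Set.disjoint_left]),
    Set.ncard_image_of_injective _ inl_injective, Set.ncard_image_of_injective _ inr_injective]

section CoronaDistance

variable {G : SimpleGraph V} {H : SimpleGraph W}

def coronaInl (G : SimpleGraph V) (H : SimpleGraph W) : G →g corona G H :=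
  ⟨inl, fun h => h⟩

theorem corona_connected (hG : G.Connected) : (corona G H).Connected := by
  have : Nonempty V := hG.nonempty
  have toInl : ∀ x : V ⊕ V × W, (corona G H).Reachable x (inl (Sum.elim id Prod.fst x)) := by
    rintro (a | ⟨i, w⟩)
    · rfl
    · exact SimpleGraph.Adj.reachable (show (corona G H).Adj (inr (i, w)) (inl i) from rfl)
  refine (SimpleGraph.connected_iff _).2
    ⟨fun x y => (toInl x).trans ?_, ⟨inl (Classical.arbitrary V)⟩⟩
  exact ((hG.preconnected _ _).map (coronaInl G H)).trans (toInl y).symm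

open Classical in
/-- Closed form of the distance in `G ⊙ H` from a vertex to the copy of `H` at `i`; as a distance
to a set, it changes by at most one along each edge. -/
noncomputable def distToCopy (G : SimpleGraph V) (i : V) : V ⊕ V × W → ℕ :=
  Sum.elim (fun b => G.dist i b + 1) (fun p => if p.1 = i then 0 else G.dist i p.1 + 2)

theorem distToCopy_le_of_adj (i : V) ⦃x y : V ⊕ V × W⦄ (h : (corona G H).Adj x y) :
    distToCopy G i y ≤ distToCopy G i x + 1 := by
  rcases x with b | ⟨b, w⟩ <;> rcases y with c | ⟨c, w'⟩
  · have := (show G.Adj b c from h).diff_dist_adj (u := i)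
    simp only [distToCopy, elim_inl]
    omega
  · obtain rfl : b = c := h
    simp only [distToCopy, elim_inl, elim_inr]
    split_ifs with hb <;> simp [hb]
  · obtain rfl : c = b := h
    simp only [distToCopy, elim_inl, elim_inr]
    split_ifs with hb <;> simp [hb]
  · obtain rfl : b = c := h.1
    simp [distToCopy]

theorem distToCopy_le_add_dist (hG : G.Connected) (i : V) (x y : V ⊕ V × W) :
    distToCopy G i y ≤ distToCopy G i x + (corona G H).dist x y :=
  ((corona_connected hG).preconnected x y).apply_le_apply_add_dist (distToCopy_le_of_adj i)

theorem corona_dist_inl_inl (hG : G.Connected) (a b : V) :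
    (corona G H).dist (inl a) (inl b) = G.dist a b := by
  refine le_antisymm ?_ ?_
  · obtain ⟨q, hq⟩ := hG.exists_walk_length_eq_dist a b
    calc (corona G H).dist (inl a) (inl b) ≤ (q.map (coronaInl G H)).length :=
          SimpleGraph.dist_le _
      _ = G.dist a b := by rw [SimpleGraph.Walk.length_map, hq]
  · have := distToCopy_le_add_dist (H := H) hG a (inl a) (inl b)
    simp only [distToCopy, elim_inl, SimpleGraph.dist_self] at this
    omega

theorem corona_dist_inr_inl (hG : G.Connected) (j : V) (w : W) (a : V) :
    (corona G H).dist (inr (j, w)) (inl a) = G.dist j a + 1 := by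
  refine le_antisymm ?_ ?_
  · have hadj : (corona G H).Adj (inr (j, w)) (inl j) := rfl
    calc (corona G H).dist (inr (j, w)) (inl a)
        ≤ (corona G H).dist (inr (j, w)) (inl j) + (corona G H).dist (inl j) (inl a) :=
          hadj.reachable.dist_triangle_left _
      _ = G.dist j a + 1 := by
          rw [SimpleGraph.dist_eq_one_iff_adj.2 hadj, corona_dist_inl_inl hG, add_comm]
  · have := distToCopy_le_add_dist (H := H) hG j (inr (j, w)) (inl a)
    simpa [distToCopy] using this

theorem corona_dist_inl_inr (hG : G.Connected) (a j : V) (w : W) :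
    (corona G H).dist (inl a) (inr (j, w)) = G.dist a j + 1 := by
  rw [SimpleGraph.dist_comm, corona_dist_inr_inl hG, SimpleGraph.dist_comm]

theorem corona_dist_inr_inr_le (hG : G.Connected) (i j : V) (z w : W) :
    (corona G H).dist (inr (i, z)) (inr (j, w)) ≤ G.dist i j + 2 := by
  have hadj : (corona G H).Adj (inr (i, z)) (inl i) := rfl
  calc (corona G H).dist (inr (i, z)) (inr (j, w))
      ≤ (corona G H).dist (inr (i, z)) (inl i) + (corona G H).dist (inl i) (inr (j, w)) :=
        hadj.reachable.dist_triangle_left _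
    _ = G.dist i j + 2 := by
        rw [SimpleGraph.dist_eq_one_iff_adj.2 hadj, corona_dist_inl_inr hG]
        ring

theorem corona_dist_inr_inr_of_ne (hG : G.Connected) {i j : V} (hij : i ≠ j) (z w : W) :
    (corona G H).dist (inr (i, z)) (inr (j, w)) = G.dist i j + 2 := by
  refine le_antisymm (corona_dist_inr_inr_le hG i j z w) ?_
  have := distToCopy_le_add_dist (H := H) hG i (inr (i, z)) (inr (j, w))
  simp [distToCopy, hij.symm] at this
  omega

theorem corona_dist_inr_inr_lt (hG : G.Connected) {i j : V} (hij : i ≠ j) (z w w' : W) :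
    (corona G H).dist (inr (i, z)) (inr (i, w)) <
      (corona G H).dist (inr (i, z)) (inr (j, w')) := by
  have := corona_dist_inr_inr_le (H := H) hG i i z w
  have := hG.pos_dist_of_ne hij
  rw [corona_dist_inr_inr_of_ne hG hij, SimpleGraph.dist_self] at *
  omega

end CoronaDistance

section UpperBound

variable {G : SimpleGraph V} {H : SimpleGraph W} {U L : Set V}

def coronaDistEqSet (U L : Set V) : Set (V ⊕ V × W) := inl '' L ∪ inr '' (U ×ˢ Set.univ)

@[simp] theorem inl_mem_coronaDistEqSet {i : V} :
    (inl i : V ⊕ V × W) ∈ coronaDistEqSet U L ↔ i ∈ L := by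
  simp [coronaDistEqSet]

@[simp] theorem inr_mem_coronaDistEqSet {j : V} {w : W} :
    (inr (j, w) : V ⊕ V × W) ∈ coronaDistEqSet U L ↔ j ∈ U := by
  simp [coronaDistEqSet]

theorem ncard_coronaDistEqSet [Finite V] [Finite W] :
    (coronaDistEqSet U L : Set (V ⊕ V × W)).ncard = L.ncard + U.ncard * Nat.card W := by
  rw [coronaDistEqSet, Set.ncard_image_inl_union_image_inr, Set.ncard_prod, Set.ncard_univ]

theorem exists_mem_coronaDistEqSet_dist_eq [Nonempty W] (hG : G.Connected)
    (hUL : U ∪ L = Set.univ) (k : V) :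
    ∃ s ∈ coronaDistEqSet U L, ∃ c,
      (∀ i, (corona G H).dist s (inl i) = G.dist k i + c) ∧
      ∀ j ∉ U, ∀ w, (corona G H).dist s (inr (j, w)) = G.dist k j + c + 1 := by
  by_cases hkL : k ∈ L
  · exact ⟨inl k, by simpa using hkL, 0, fun i => corona_dist_inl_inl hG k i,
      fun j _ w => corona_dist_inl_inr hG k j w⟩
  · have hkU : k ∈ U := (Set.eq_univ_iff_forall.1 hUL k).resolve_right hkL
    obtain ⟨w₀⟩ := ‹Nonempty W›
    exact ⟨inr (k, w₀), by simpa using hkU, 1, fun i => corona_dist_inr_inl hG k w₀ i,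
      fun j hj w => corona_dist_inr_inr_of_ne hG (ne_of_mem_of_not_mem hkU hj) w₀ w⟩

theorem isDistEqSet_coronaDistEqSet [Nonempty W] (hG : G.Connected)
    (hU : IsVertexCover (emptyBisector G) U) (hL : IsVertexCover (emptyBisector G) L)
    (hFE : IsForwardEqualizedPair G U L) :
    IsDistEqSet (corona G H) (coronaDistEqSet U L) := by
  have hU' := isVertexCover_emptyBisector_iff.1 hU
  have hL' := isVertexCover_emptyBisector_iff.1 hL
  have mixed : ∀ i j w, i ∉ L → j ∉ U → ∃ s ∈ coronaDistEqSet U L,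
      (corona G H).dist s (inl i) = (corona G H).dist s (inr (j, w)) := by
    intro i j w hi hj
    have hiU := (Set.eq_univ_iff_forall.1 hFE.1 i).resolve_right hi
    have hjL := (Set.eq_univ_iff_forall.1 hFE.1 j).resolve_left hj
    obtain ⟨k, hk⟩ := hFE.2 ⟨hiU, hi⟩ ⟨hjL, hj⟩
    obtain ⟨s, hs, c, hinl, hinr⟩ := exists_mem_coronaDistEqSet_dist_eq (H := H) hG hFE.1 k
    exact ⟨s, hs, by rw [hinl, hinr j hj, hk]; ring⟩
  rintro (i | ⟨i, w⟩) (j | ⟨j, w'⟩) hx hy hxy <;>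
    simp only [inl_mem_coronaDistEqSet, inr_mem_coronaDistEqSet] at hx hy
  · obtain ⟨k, hk⟩ := hL' hx hy (fun h => hxy (h ▸ rfl))
    obtain ⟨s, hs, c, hinl, -⟩ := exists_mem_coronaDistEqSet_dist_eq (H := H) hG hFE.1 k
    exact ⟨s, hs, by rw [hinl, hinl, hk]⟩
  · exact mixed i j w' hx hy
  · obtain ⟨s, hs, h⟩ := mixed j i w hy hx
    exact ⟨s, hs, h.symm⟩
  · obtain ⟨k, hk⟩ : ∃ k, G.dist k i = G.dist k j := by
      obtain rfl | hij := eq_or_ne i j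
      · exact ⟨i, rfl⟩
      · exact hU' hx hy hij
    obtain ⟨s, hs, c, -, hinr⟩ := exists_mem_coronaDistEqSet_dist_eq (H := H) hG hFE.1 k
    exact ⟨s, hs, by rw [hinr i hx, hinr j hy, hk]⟩

end UpperBound

section LowerBound

variable {G : SimpleGraph V} {H : SimpleGraph W} {S : Set (V ⊕ V × W)}

namespace IsDistEqSet

theorem isVertexCover_preimage_inl (hS : IsDistEqSet (corona G H) S) (hG : G.Connected) :
    IsVertexCover (emptyBisector G) (inl ⁻¹' S) := by
  refine isVertexCover_emptyBisector_iff.2 fun i j hi hj hij => ?_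
  obtain ⟨s, -, hs⟩ := hS hi hj (inl_injective.ne hij)
  rcases s with k | ⟨k, z⟩
  · exact ⟨k, by rwa [corona_dist_inl_inl hG, corona_dist_inl_inl hG] at hs⟩
  · exact ⟨k, by rw [corona_dist_inr_inl hG, corona_dist_inr_inl hG] at hs; omega⟩

theorem isVertexCover_setOf_forall_inr_mem (hS : IsDistEqSet (corona G H) S) (hG : G.Connected) :
    IsVertexCover (emptyBisector G) {i | ∀ w, inr (i, w) ∈ S} := by
  refine isVertexCover_emptyBisector_iff.2 fun i j hi hj hij => ?_
  simp only [Set.mem_ofPred_eq, not_forall] at hi hj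
  obtain ⟨w, hw⟩ := hi
  obtain ⟨w', hw'⟩ := hj
  obtain ⟨s, -, hs⟩ := hS hw hw' (by simp [hij])
  rcases s with k | ⟨k, z⟩
  · exact ⟨k, by rw [corona_dist_inl_inr hG, corona_dist_inl_inr hG] at hs; omega⟩
  · obtain rfl | hki := eq_or_ne k i
    · exact absurd hs (corona_dist_inr_inr_lt hG hij z w w').ne
    obtain rfl | hkj := eq_or_ne k j
    · exact absurd hs (corona_dist_inr_inr_lt hG hij.symm z w' w).ne'
    rw [corona_dist_inr_inr_of_ne hG hki, corona_dist_inr_inr_of_ne hG hkj] at hs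
    exact ⟨k, by omega⟩

theorem exists_inr_mem (hS : IsDistEqSet (corona G H) S) (hG : G.Connected) {i : V} {w : W}
    (hi : inl i ∉ S) (hw : inr (i, w) ∉ S) : ∃ z, inr (i, z) ∈ S := by
  obtain ⟨s, hsS, hs⟩ := hS hi hw inl_ne_inr
  rcases s with k | ⟨k, z⟩
  · rw [corona_dist_inl_inl hG, corona_dist_inl_inr hG] at hs
    omega
  · obtain rfl | hki := eq_or_ne k i
    · exact ⟨z, hsS⟩
    · rw [corona_dist_inr_inl hG, corona_dist_inr_inr_of_ne hG hki] at hs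
      omega

theorem exists_dist_eq_add_one (hS : IsDistEqSet (corona G H) S) (hG : G.Connected)
    {i j : V} {w : W} (hi : inl i ∉ S) (hw : inr (j, w) ∉ S) (hij : i ≠ j) :
    ∃ k, G.dist k i = G.dist k j + 1 := by
  obtain ⟨s, -, hs⟩ := hS hi hw inl_ne_inr
  rcases s with k | ⟨k, z⟩
  · exact ⟨k, by rwa [corona_dist_inl_inl hG, corona_dist_inl_inr hG] at hs⟩
  · refine ⟨k, ?_⟩
    rw [corona_dist_inr_inl hG] at hs
    obtain rfl | hkj := eq_or_ne k j
    · have := corona_dist_inr_inr_le (H := H) hG k k z w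
      have := hG.pos_dist_of_ne hij.symm
      rw [SimpleGraph.dist_self] at *
      omega
    · rw [corona_dist_inr_inr_of_ne hG hkj] at hs
      omega

theorem betaStar_le (hS : IsDistEqSet (corona G H) S) (hG : G.Connected) :
    betaStar G ≤ (inl ⁻¹' S ∩ {i | ∀ w, inr (i, w) ∈ S}).ncard := by
  set A := inl ⁻¹' S
  set B := {i | ∀ w, inr (i, w) ∈ S}
  have hfwd : IsForwardEqualizedPair G B (A ∪ Bᶜ) := by
    refine ⟨by simp [Set.union_comm A, ← Set.union_assoc], ?_⟩
    rintro a ⟨haB, haAB⟩ b ⟨-, hbB⟩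
    have haA : inl a ∉ S := fun h => haAB (Or.inl h)
    obtain ⟨w, hw⟩ := not_forall.1 hbB
    exact hS.exists_dist_eq_add_one hG haA hw (ne_of_mem_of_not_mem haB hbB)
  have := betaStar_le_ncard_inter (hS.isVertexCover_setOf_forall_inr_mem hG)
    ((hS.isVertexCover_preimage_inl hG).mono Set.subset_union_left) hfwd
  rwa [Set.inter_union_distrib_left, Set.inter_compl_self, Set.union_empty, Set.inter_comm] at this

theorem le_ncard [Finite V] [Finite W] [Nonempty W] (hS : IsDistEqSet (corona G H) S)
    (hG : G.Connected) :
    vcNum (emptyBisector G) * Nat.card W + indepNum (emptyBisector G) + betaStar G ≤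
      S.ncard := by
  set A := inl ⁻¹' S
  set B := {i | ∀ w, inr (i, w) ∈ S}
  set P := inr ⁻¹' S
  have hSAP : S.ncard = A.ncard + P.ncard := by
    rw [← Set.ncard_image_inl_union_image_inr, Set.image_preimage_inl_union_image_preimage_inr]
  have hBP : B ×ˢ Set.univ ⊆ P := fun p hp => hp.1 p.2
  have hP := Set.ncard_sdiff_add_ncard_of_subset hBP
  rw [Set.ncard_prod, Set.ncard_univ] at hP
  have hrest : (A ∪ B)ᶜ.ncard ≤ (P \ B ×ˢ Set.univ).ncard := by
    refine (Set.ncard_le_ncard ?_).trans (Set.ncard_image_le (f := Prod.fst))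
    intro i hi
    simp only [Set.compl_union, Set.mem_inter_iff, Set.mem_compl_iff, Set.mem_preimage,
      Set.mem_ofPred_eq, not_forall, A, B] at hi
    obtain ⟨hiA, w, hw⟩ := hi
    obtain ⟨z, hz⟩ := hS.exists_inr_mem hG hiA hw
    exact ⟨(i, z), ⟨hz, fun h => hw (h.1 w)⟩, rfl⟩
  have hβ : vcNum (emptyBisector G) ≤ B.ncard := vcNum_le (hS.isVertexCover_setOf_forall_inr_mem hG)
  have hβstar : betaStar G ≤ (A ∩ B).ncard := hS.betaStar_le hG
  have hαβ := indepNum_add_vcNum (emptyBisector G)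
  have hAB := Set.ncard_union_add_ncard_inter A B
  have hABc := Set.ncard_add_ncard_compl (A ∪ B)
  have hBc := Set.ncard_add_ncard_compl B
  have hmul : vcNum (emptyBisector G) * Nat.card W + (B.ncard - vcNum (emptyBisector G)) ≤
      B.ncard * Nat.card W :=
    calc _ ≤ vcNum (emptyBisector G) * Nat.card W +
          (B.ncard - vcNum (emptyBisector G)) * Nat.card W := by
          gcongr; exact Nat.le_mul_of_pos_right _ Nat.card_pos
      _ = B.ncard * Nat.card W := by rw [← add_mul, Nat.add_sub_cancel' hβ]
  omega

end IsDistEqSet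

end LowerBound

/-- If there are vertex covers `U, L` of `Ĝ` with `(U, L)` a
forward-equalized pair of `G`, `|U ∩ L| = β*(G)` and `|U| = β(Ĝ)`, then
`ξ(G ⊙ H) = β(Ĝ)·n(H) + α(Ĝ) + β*(G)`. -/
theorem eqdim_corona_eq_lower_bound [Fintype V] [Fintype W] [Nonempty W]
    (G : SimpleGraph V) (H : SimpleGraph W) (hG : G.Connected)
    (U L : Set V) (hU : IsVertexCover (emptyBisector G) U)
    (hL : IsVertexCover (emptyBisector G) L)
    (hFE : IsForwardEqualizedPair G U L)
    (hcap : (U ∩ L).ncard = betaStar G)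
    (hUcard : U.ncard = vcNum (emptyBisector G)) :
    eqdim (corona G H) =
      vcNum (emptyBisector G) * Fintype.card W + indepNum (emptyBisector G) + betaStar G := by
  rw [← Nat.card_eq_fintype_card]
  refine le_antisymm ?_ (le_eqdim fun S hS => hS.le_ncard hG)
  have hUL := Set.ncard_union_add_ncard_inter U L
  rw [hFE.1, Set.ncard_univ] at hUL
  have := indepNum_add_vcNum (emptyBisector G)
  calc eqdim (corona G H) ≤ (coronaDistEqSet U L).ncard :=
        eqdim_le (isDistEqSet_coronaDistEqSet hG hU hL hFE)
    _ = L.ncard + U.ncard * Nat.card W := ncard_coronaDistEqSet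
    _ = _ := by rw [hUcard]; omega
end

section
/- Let G be a finite simple connected graph and H any finite simple graph. Then ξ(G⊙H) = n(G) if and only if either β(Ĝ) = 0, or (n(H) = 1 and β*(G) = 0). -/
universe u v

variable {V : Type u} {W : Type v}

/-! Distances in `G ⊙ H` are those of `G` shifted by the number of endpoints lying in copies of
`H`, except inside a single copy. Hence a distance-equalizer set meets every fiber
`{i} ∪ V(Hᵢ)`, and `ξ(G ⊙ H) = n(G)` means that some distance-equalizer set is a transversal
of the fibers. If `n(H) ≥ 2`, such a transversal misses a vertex of every copy, and equalizing
these vertices pairwise forces every bisector of `G` to be nonempty. If `n(H) = 1`, the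
transversal is determined by the set `X` of fibers in which it takes the copy vertex, and it
is distance-equalizing exactly when `X` and its complement are vertex covers of `Ĝ` forming a
forward-equalized pair. -/

namespace SimpleGraph

variable {α : Type*} {G : SimpleGraph α} {f : α → ℕ} {u v : α}

lemma Walk.le_add_length (hf : ∀ ⦃x y⦄, G.Adj x y → f y ≤ f x + 1) (p : G.Walk u v) :
    f v ≤ f u + p.length := by
  induction p with
  | nil => simp
  | cons h _ ih => rw [Walk.length_cons]; have := hf h; omega

lemma Reachable.le_add_dist (hf : ∀ ⦃x y⦄, G.Adj x y → f y ≤ f x + 1)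
    (h : G.Reachable u v) : f v ≤ f u + G.dist u v := by
  obtain ⟨p, hp⟩ := h.exists_walk_length_eq_dist
  exact hp ▸ p.le_add_length hf

end SimpleGraph

section EmptyBisector

variable {α : Type*} {G : SimpleGraph α}

lemma emptyBisector_eq_bot_iff :
    emptyBisector G = ⊥ ↔ ∀ ⦃x y⦄, x ≠ y → (bisector G x y).Nonempty := by
  simp [SimpleGraph.eq_bot_iff_forall_not_adj, emptyBisector, Set.nonempty_iff_ne_empty]

lemma isVertexCover_emptyBisector_iff_s9 {C : Set α} :
    IsVertexCover (emptyBisector G) C ↔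
      ∀ ⦃x y⦄, x ∉ C → y ∉ C → x ≠ y → (bisector G x y).Nonempty := by
  simp only [IsVertexCover, emptyBisector, Set.nonempty_iff_ne_empty]
  grind

lemma isForwardEqualizedPair_compl_iff {X : Set α} :
    IsForwardEqualizedPair G X Xᶜ ↔
      ∀ a ∈ X, ∀ b ∉ X, ∃ w, G.dist w a = G.dist w b + 1 := by
  simp [IsForwardEqualizedPair]

lemma vcNum_eq_zero_iff [Finite α] : vcNum G = 0 ↔ G = ⊥ := by
  have hne : {n | ∃ C : Set α, IsVertexCover G C ∧ C.ncard = n}.Nonempty :=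
    ⟨_, Set.univ, fun _ _ _ => Or.inl trivial, rfl⟩
  simp only [vcNum, Nat.sInf_eq_zero, hne.ne_empty, or_false, Set.mem_ofPred_eq]
  constructor
  · rintro ⟨C, hC, hC0⟩
    obtain rfl := (Set.ncard_eq_zero C.toFinite).1 hC0
    exact SimpleGraph.eq_bot_iff_forall_not_adj.2 fun x y h => by simpa using hC h
  · rintro rfl
    exact ⟨∅, fun _ _ h => h.elim, Set.ncard_empty α⟩

lemma betaStar_eq_zero_iff [Finite α] :
    betaStar G = 0 ↔ ∃ X, IsVertexCover (emptyBisector G) X ∧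
      IsVertexCover (emptyBisector G) Xᶜ ∧ IsForwardEqualizedPair G X Xᶜ := by
  have hne : {n | ∃ X Y : Set α, IsVertexCover (emptyBisector G) X ∧
      IsVertexCover (emptyBisector G) Y ∧ IsForwardEqualizedPair G X Y ∧
      (X ∩ Y).ncard = n}.Nonempty :=
    ⟨_, Set.univ, Set.univ, fun _ _ _ => Or.inl trivial, fun _ _ _ => Or.inl trivial,
      ⟨Set.univ_union _, fun _ ha => (ha.2 trivial).elim⟩, rfl⟩
  simp only [betaStar, Nat.sInf_eq_zero, hne.ne_empty, or_false, Set.mem_ofPred_eq]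
  constructor
  · rintro ⟨X, Y, hX, hY, hXY, hdisj⟩
    have hcompl : Xᶜ = Y := IsCompl.compl_eq
      ⟨Set.disjoint_iff_inter_eq_empty.2 ((Set.ncard_eq_zero (X ∩ Y).toFinite).1 hdisj),
        codisjoint_iff.2 hXY.1⟩
    exact ⟨X, hX, hcompl ▸ hY, hcompl ▸ hXY⟩
  · rintro ⟨X, hX, hXc, hXXc⟩
    exact ⟨X, Xᶜ, hX, hXc, hXXc, by rw [Set.inter_compl_self, Set.ncard_empty]⟩

end EmptyBisector

lemma Set.ncard_eq_card_iff_bijOn {α β : Type*} [Finite β] {f : α → β} {s : Set α}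
    (hs : s.Finite) (hf : Set.SurjOn f s Set.univ) :
    s.ncard = Nat.card β ↔ Set.BijOn f s Set.univ := by
  have himage : f '' s = Set.univ := hf.image_eq_of_mapsTo (Set.mapsTo_univ f s)
  refine ⟨fun h => ⟨Set.mapsTo_univ f s, Set.injOn_of_ncard_image_eq ?_ hs, hf⟩,
    fun h => ?_⟩
  · rw [himage, Set.ncard_univ, h]
  · rw [← h.injOn.ncard_image, himage, Set.ncard_univ]

namespace Corona

variable {G : SimpleGraph V} {H : SimpleGraph W}

def proj : V ⊕ V × W → V := Sum.elim id Prod.fst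

@[simp] lemma proj_inl (a : V) : proj (Sum.inl a : V ⊕ V × W) = a := rfl
@[simp] lemma proj_inr (p : V × W) : proj (Sum.inr p : V ⊕ V × W) = p.1 := rfl

section Distances

open SimpleGraph

open Classical in
/-- The distance in `G ⊙ H` to the copy `Hₐ`; it grows by at most one along each edge, which
yields all the lower bounds on distances in `G ⊙ H`. -/
noncomputable def distToCopy (G : SimpleGraph V) (a : V) : V ⊕ V × W → ℕ
  | Sum.inl b => G.dist a b + 1
  | Sum.inr p => if p.1 = a then 0 else G.dist a p.1 + 2

lemma distToCopy_le_add_one {a : V} {x y : V ⊕ V × W} (h : (corona G H).Adj x y) :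
    distToCopy G a y ≤ distToCopy G a x + 1 := by
  rcases x with b | ⟨b, w⟩ <;> rcases y with c | ⟨c, w'⟩
  · have := (show G.Adj b c from h).diff_dist_adj (u := a)
    simp only [distToCopy]; omega
  · obtain rfl : b = c := h
    simp only [distToCopy]; split_ifs <;> simp_all
  · obtain rfl : c = b := h
    simp only [distToCopy]; split_ifs <;> simp_all
  · obtain rfl : b = c := h.1
    exact Nat.le_succ _

lemma distToCopy_le_add_dist {a : V} {x y : V ⊕ V × W} (h : (corona G H).Reachable x y) :
    distToCopy G a y ≤ distToCopy G a x + (corona G H).dist x y :=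
  h.le_add_dist fun _ _ => distToCopy_le_add_one

variable (G H) in
def inlHom : G →g corona G H := ⟨Sum.inl, id⟩

lemma adj_inl_inr (a : V) (w : W) : (corona G H).Adj (Sum.inl a) (Sum.inr (a, w)) := rfl

lemma exists_walk_inl_inl (hG : G.Connected) (a b : V) :
    ∃ q : (corona G H).Walk (Sum.inl a) (Sum.inl b), q.length = G.dist a b := by
  obtain ⟨p, hp⟩ := hG.exists_walk_length_eq_dist a b
  exact ⟨p.map (inlHom G H), (Walk.length_map _ _).trans hp⟩

lemma dist_inl_inl (hG : G.Connected) (a b : V) :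
    (corona G H).dist (Sum.inl a) (Sum.inl b) = G.dist a b := by
  obtain ⟨q, hq⟩ := exists_walk_inl_inl (H := H) hG a b
  have hle := distToCopy_le_add_dist (a := a) q.reachable
  simp only [distToCopy, SimpleGraph.dist_self] at hle
  have := dist_le q
  omega

lemma dist_inl_inr (hG : G.Connected) (a b : V) (w : W) :
    (corona G H).dist (Sum.inl a) (Sum.inr (b, w)) = G.dist a b + 1 := by
  obtain ⟨q, hq⟩ := exists_walk_inl_inl (H := H) hG a b
  have hle := distToCopy_le_add_dist (a := b) (q.concat (adj_inl_inr b w)).reverse.reachable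
  simp only [distToCopy, if_true] at hle
  rw [SimpleGraph.dist_comm, SimpleGraph.dist_comm (G := corona G H)] at hle
  have := dist_le (q.concat (adj_inl_inr b w))
  rw [Walk.length_concat] at this
  omega

lemma dist_inr_inl (hG : G.Connected) (a b : V) (w : W) :
    (corona G H).dist (Sum.inr (b, w)) (Sum.inl a) = G.dist a b + 1 := by
  rw [SimpleGraph.dist_comm, dist_inl_inr hG]

lemma dist_inr_inr (hG : G.Connected) {a b : V} (hab : a ≠ b) (w w' : W) :
    (corona G H).dist (Sum.inr (a, w)) (Sum.inr (b, w')) = G.dist a b + 2 := by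
  obtain ⟨q, hq⟩ := exists_walk_inl_inl (H := H) hG a b
  let r := Walk.cons (adj_inl_inr a w).symm (q.concat (adj_inl_inr b w'))
  have hle := distToCopy_le_add_dist (a := a) r.reachable
  simp only [distToCopy, if_true, if_neg hab.symm] at hle
  have := dist_le r
  rw [Walk.length_cons, Walk.length_concat] at this
  omega

lemma dist_inr_inr_le_two (a : V) (w w' : W) :
    (corona G H).dist (Sum.inr (a, w)) (Sum.inr (a, w')) ≤ 2 :=
  dist_le (Walk.cons (adj_inl_inr a w).symm (Walk.cons (adj_inl_inr a w') Walk.nil))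

lemma dist_inl (hG : G.Connected) (t : V ⊕ V × W) (a : V) :
    (corona G H).dist t (Sum.inl a) = G.dist (proj t) a + t.isRight.toNat := by
  rcases t with k | ⟨k, w⟩
  · simp [dist_inl_inl hG]
  · simp [dist_inr_inl hG, SimpleGraph.dist_comm]

end Distances

lemma surjOn_proj [Nonempty W] (hG : G.Connected) {S : Set (V ⊕ V × W)}
    (hS : IsDistEqSet (corona G H) S) : Set.SurjOn proj S Set.univ := by
  intro i _
  by_contra hmiss
  have hmiss' : ∀ x ∈ S, proj x ≠ i := fun x hx h => hmiss ⟨x, hx, h⟩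
  obtain ⟨w⟩ := ‹Nonempty W›
  obtain ⟨t, ht, heq⟩ := hS (x := Sum.inl i) (y := Sum.inr (i, w))
    (fun h => hmiss' _ h rfl) (fun h => hmiss' _ h rfl) Sum.inl_ne_inr
  rcases t with k | ⟨k, w'⟩
  · rw [dist_inl_inl hG, dist_inl_inr hG] at heq
    omega
  · have hki : k ≠ i := hmiss' _ ht
    rw [dist_inr_inl hG, dist_inr_inr hG hki, SimpleGraph.dist_comm] at heq
    omega

lemma eqdim_eq_card_iff [Fintype V] [Finite W] [Nonempty W] (hG : G.Connected) :
    eqdim (corona G H) = Fintype.card V ↔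
      ∃ S, IsDistEqSet (corona G H) S ∧ Set.BijOn proj S Set.univ := by
  have hbij : ∀ {S}, IsDistEqSet (corona G H) S →
      (S.ncard = Fintype.card V ↔ Set.BijOn proj S Set.univ) := fun hS => by
    rw [← Nat.card_eq_fintype_card]
    exact Set.ncard_eq_card_iff_bijOn (Set.toFinite _) (surjOn_proj hG hS)
  have hlow : ∀ {S}, IsDistEqSet (corona G H) S → Fintype.card V ≤ S.ncard := fun hS => by
    rw [← Nat.card_eq_fintype_card, ← Set.ncard_univ,
      ← (surjOn_proj hG hS).image_eq_of_mapsTo (Set.mapsTo_univ _ _)]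
    exact Set.ncard_image_le (Set.toFinite _)
  constructor
  · intro h
    obtain ⟨S, hS, hcard⟩ : Fintype.card V ∈
        {n | ∃ S, IsDistEqSet (corona G H) S ∧ S.ncard = n} :=
      h ▸ Nat.sInf_mem ⟨_, Set.univ, fun _ _ hx => (hx trivial).elim, rfl⟩
    exact ⟨S, hS, (hbij hS).1 hcard⟩
  · rintro ⟨S, hS, hS'⟩
    refine le_antisymm (Nat.sInf_le ⟨S, hS, (hbij hS).2 hS'⟩) (le_csInf ⟨_, S, hS, rfl⟩ ?_)
    rintro _ ⟨T, hT, rfl⟩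
    exact hlow hT

lemma emptyBisector_eq_bot_of_isDistEqSet (hG : G.Connected) {S : Set (V ⊕ V × W)}
    (hS : IsDistEqSet (corona G H) S) (hcopy : ∀ i, ∃ w, Sum.inr (i, w) ∉ S) :
    emptyBisector G = ⊥ := by
  refine emptyBisector_eq_bot_iff.2 fun i j hij => ?_
  obtain ⟨wi, hwi⟩ := hcopy i
  obtain ⟨wj, hwj⟩ := hcopy j
  obtain ⟨t, -, heq⟩ := hS hwi hwj (by simp [hij])
  rcases t with k | ⟨k, w⟩
  · rw [dist_inl_inr hG, dist_inl_inr hG] at heq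
    exact ⟨k, by simpa [bisector] using heq⟩
  -- a vertex of `Hᵢ` is within 2 of `Hᵢ` but at least 3 away from `Hⱼ`
  have hfar : ∀ {a b : V} {u v : W}, a ≠ b →
      (corona G H).dist (Sum.inr (a, w)) (Sum.inr (a, u)) ≠
        (corona G H).dist (Sum.inr (a, w)) (Sum.inr (b, v)) := by
    intro a b u v hab hd
    have := dist_inr_inr_le_two (G := G) (H := H) a w u
    have := hG.pos_dist_of_ne hab
    rw [dist_inr_inr hG hab] at hd
    omega
  obtain rfl | hki := eq_or_ne k i
  · exact (hfar hij heq).elim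
  obtain rfl | hkj := eq_or_ne k j
  · exact (hfar hij.symm heq.symm).elim
  rw [dist_inr_inr hG hki, dist_inr_inr hG hkj] at heq
  exact ⟨k, by simpa [bisector] using heq⟩

lemma exists_inr_notMem [Nontrivial W] {S : Set (V ⊕ V × W)} (hS : Set.InjOn proj S) (i : V) :
    ∃ w, Sum.inr (i, w) ∉ S := by
  obtain ⟨w, w', hne⟩ := exists_pair_ne W
  by_contra! h
  exact hne (by simpa using hS (h w) (h w') rfl)


/-- When `n(H) = 1`, every distance-equalizer set of `G ⊙ H` of size `n(G)` is of this form. -/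
def copyOn (X : Set V) : Set (V ⊕ V × W) := {x | Sum.elim (· ∉ X) (fun p => p.1 ∈ X) x}

@[simp] lemma mem_copyOn_inl {X : Set V} {a : V} :
    (Sum.inl a : V ⊕ V × W) ∈ copyOn X ↔ a ∉ X := Iff.rfl

@[simp] lemma mem_copyOn_inr {X : Set V} {p : V × W} :
    (Sum.inr p : V ⊕ V × W) ∈ copyOn X ↔ p.1 ∈ X := Iff.rfl

lemma dist_inr_of_mem_copyOn (hG : G.Connected) {X : Set V} {t : V ⊕ V × W}
    (ht : t ∈ copyOn X) {b : V} (hb : b ∉ X) (w : W) :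
    (corona G H).dist t (Sum.inr (b, w)) = G.dist (proj t) b + 1 + t.isRight.toNat := by
  rcases t with k | ⟨k, w'⟩
  · simp [dist_inl_inr hG]
  · have hkb : k ≠ b := fun h => hb (h ▸ ht)
    simp [dist_inr_inr hG hkb]

lemma surjOn_proj_copyOn [Nonempty W] (X : Set V) :
    Set.SurjOn proj (copyOn X : Set (V ⊕ V × W)) Set.univ := by
  intro i _
  obtain ⟨w⟩ := ‹Nonempty W›
  by_cases hi : i ∈ X
  · exact ⟨Sum.inr (i, w), hi, rfl⟩
  · exact ⟨Sum.inl i, hi, rfl⟩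

lemma bijOn_proj_copyOn [Nonempty W] {X : Set V} (h : Subsingleton W ∨ X = ∅) :
    Set.BijOn proj (copyOn X : Set (V ⊕ V × W)) Set.univ := by
  refine ⟨Set.mapsTo_univ _ _, ?_, surjOn_proj_copyOn X⟩
  rintro (a | ⟨a, w⟩) ha (b | ⟨b, w'⟩) hb (hab : _ = _)
  all_goals simp only [proj_inl, proj_inr, mem_copyOn_inl, mem_copyOn_inr] at ha hb hab
  · rw [hab]
  · exact (ha (hab ▸ hb)).elim
  · exact (hb (hab ▸ ha)).elim
  · subst hab
    obtain h | rfl := h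
    · rw [Subsingleton.elim w w']
    · exact ha.elim

lemma eq_copyOn_of_bijOn [Subsingleton W] {S : Set (V ⊕ V × W)}
    (h : Set.BijOn proj S Set.univ) : S = copyOn {i | Sum.inl i ∉ S} := by
  ext (a | ⟨a, w⟩)
  · simp
  · simp only [mem_copyOn_inr, Set.mem_ofPred_eq]
    refine ⟨fun ha hinl => Sum.inl_ne_inr (h.injOn hinl ha rfl), fun hinl => ?_⟩
    obtain ⟨(b | ⟨b, w'⟩), hb, rfl : _ = a⟩ := h.surjOn (Set.mem_univ a)
    · exact (hinl hb).elim
    · rwa [Subsingleton.elim w w']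

lemma isDistEqSet_copyOn [Nonempty W] (hG : G.Connected) {X : Set V}
    (hX : IsVertexCover (emptyBisector G) X) (hXc : IsVertexCover (emptyBisector G) Xᶜ)
    (hF : IsForwardEqualizedPair G X Xᶜ) : IsDistEqSet (corona G H) (copyOn X) := by
  rw [isVertexCover_emptyBisector_iff_s9] at hX hXc
  rw [isForwardEqualizedPair_compl_iff] at hF
  -- a representative `t` of `k` sees every non-member at its distance from `k` plus
  -- `t.isRight.toNat`, so bisector vertices of `G` lift to equalizing vertices
  have hrep : ∀ k, ∃ t ∈ (copyOn X : Set (V ⊕ V × W)), proj t = k :=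
    fun k => surjOn_proj_copyOn X (Set.mem_univ k)
  rintro (a | ⟨a, w⟩) (b | ⟨b, w'⟩) ha hb hab
  all_goals simp only [mem_copyOn_inl, mem_copyOn_inr, not_not] at ha hb
  · obtain ⟨k, hk⟩ := hXc (not_not.2 ha) (not_not.2 hb) (fun h => hab (h ▸ rfl))
    obtain ⟨t, ht, rfl⟩ := hrep k
    exact ⟨t, ht, by rw [dist_inl hG, dist_inl hG, show G.dist _ a = G.dist _ b from hk]⟩
  · obtain ⟨k, hk⟩ := hF a ha b hb
    obtain ⟨t, ht, rfl⟩ := hrep k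
    exact ⟨t, ht, by rw [dist_inl hG, dist_inr_of_mem_copyOn hG ht hb, hk]⟩
  · obtain ⟨k, hk⟩ := hF b hb a ha
    obtain ⟨t, ht, rfl⟩ := hrep k
    exact ⟨t, ht, by rw [dist_inl hG, dist_inr_of_mem_copyOn hG ht ha, hk]⟩
  obtain rfl | hne := eq_or_ne a b
  · exact ⟨Sum.inl a, ha, by rw [dist_inl_inr hG, dist_inl_inr hG]⟩
  obtain ⟨k, hk⟩ := hX ha hb hne
  obtain ⟨t, ht, rfl⟩ := hrep k
  exact ⟨t, ht, by rw [dist_inr_of_mem_copyOn hG ht ha, dist_inr_of_mem_copyOn hG ht hb,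
    show G.dist _ a = G.dist _ b from hk]⟩

lemma isDistEqSet_copyOn_iff [Nonempty W] (hG : G.Connected) (X : Set V) :
    IsDistEqSet (corona G H) (copyOn X) ↔ IsVertexCover (emptyBisector G) X ∧
      IsVertexCover (emptyBisector G) Xᶜ ∧ IsForwardEqualizedPair G X Xᶜ := by
  refine ⟨fun hS => ?_, fun ⟨hX, hXc, hF⟩ => isDistEqSet_copyOn hG hX hXc hF⟩
  rw [isVertexCover_emptyBisector_iff_s9, isVertexCover_emptyBisector_iff_s9,
    isForwardEqualizedPair_compl_iff]
  obtain ⟨w⟩ := ‹Nonempty W›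
  refine ⟨fun i j hi hj hij => ?_, fun i j hi hj hij => ?_, fun a ha b hb => ?_⟩
  · obtain ⟨t, ht, heq⟩ := hS (x := Sum.inr (i, w)) (y := Sum.inr (j, w)) hi hj (by simp [hij])
    rw [dist_inr_of_mem_copyOn hG ht hi, dist_inr_of_mem_copyOn hG ht hj] at heq
    exact ⟨proj t, show G.dist _ i = G.dist _ j by omega⟩
  · obtain ⟨t, ht, heq⟩ := hS (x := Sum.inl i) (y := Sum.inl j) hi hj (by simp [hij])
    rw [dist_inl hG, dist_inl hG] at heq
    exact ⟨proj t, show G.dist _ i = G.dist _ j by omega⟩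
  · obtain ⟨t, ht, heq⟩ := hS (x := Sum.inl a) (y := Sum.inr (b, w)) (not_not.2 ha) hb
      Sum.inl_ne_inr
    rw [dist_inl hG, dist_inr_of_mem_copyOn hG ht hb] at heq
    exact ⟨proj t, by omega⟩

end Corona

/-- `ξ(G ⊙ H) = n(G)` iff `β(Ĝ) = 0`, or `n(H) = 1` and `β*(G) = 0`. -/
theorem eqdim_corona_eq_card_iff [Fintype V] [Fintype W] [Nonempty W]
    (G : SimpleGraph V) (H : SimpleGraph W) (hG : G.Connected) :
    eqdim (corona G H) = Fintype.card V ↔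
      vcNum (emptyBisector G) = 0 ∨ (Fintype.card W = 1 ∧ betaStar G = 0) := by
  have hW : Fintype.card W = 1 ↔ Subsingleton W := by
    rw [← Fintype.card_le_one_iff_subsingleton]
    exact ⟨le_of_eq, fun h => h.antisymm Fintype.card_pos⟩
  rw [Corona.eqdim_eq_card_iff hG, vcNum_eq_zero_iff, betaStar_eq_zero_iff, hW]
  constructor
  · rintro ⟨S, hS, hbij⟩
    rcases subsingleton_or_nontrivial W with hsub | _
    · rw [Corona.eq_copyOn_of_bijOn hbij, Corona.isDistEqSet_copyOn_iff hG] at hS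
      exact Or.inr ⟨hsub, _, hS⟩
    · exact Or.inl (Corona.emptyBisector_eq_bot_of_isDistEqSet hG hS
        (Corona.exists_inr_notMem hbij.injOn))
  · rintro (hbot | ⟨hsub, X, hX⟩)
    · refine ⟨Corona.copyOn ∅, Corona.isDistEqSet_copyOn hG ?_ ?_ ?_,
        Corona.bijOn_proj_copyOn (Or.inr rfl)⟩
      all_goals simp [hbot, IsVertexCover, IsForwardEqualizedPair]
    · exact ⟨Corona.copyOn X, (Corona.isDistEqSet_copyOn_iff hG X).2 hX,
        Corona.bijOn_proj_copyOn (Or.inl hsub)⟩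
end
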